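/- The area of the intersection of two disks of radii d and D (with 0 < d ≤ D) whose centers are a distance Δx apart, where |D − d| < Δx < D + d, equals d²·arccos((d² + Δx² − D²)/(2Δx·d)) + D²·arccos((D² + Δx² − d²)/(2Δx·D)) − (1/2)·√((d+Δx+D)(d+Δx−D)(D+d−Δx)(D+Δx−d)). -/

import Mathlib

/-!
Move the centres to `(0, 0)` and `(Δx, 0)` by an isometry of the plane. The lens is then the
region `|y| < √(min (d² - x²) (D² - (x - Δx)²))`, whose vertical chords are cut by the small
circle to the right of the radical axis `x = x₀ := (d² + Δx² - D²) / (2Δx)` and by the large one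
to its left. Integrating the chord length gives the sum of two circular segments, computed from
the antiderivative `x √(r² - x²) - r² arccos (x / r)` of `2 √(r² - x²)`; the common half-chord
`√(d² - x₀²)` on the radical axis is `√((d+Δx+D)(d+Δx-D)(D+d-Δx)(D+Δx-d)) / (2Δx)` (Heron).
-/

open MeasureTheory Real Set Metric

theorem hasDerivAt_mul_sqrt_sq_sub_sq_sub_arccos {r x : ℝ} (hr : 0 < r) (hx : x ∈ Ioo (-r) r) :
    HasDerivAt (fun x => x * √(r ^ 2 - x ^ 2) - r ^ 2 * arccos (x / r))
      (2 * √(r ^ 2 - x ^ 2)) x := by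
  have hpos : 0 < r ^ 2 - x ^ 2 := by nlinarith [hx.1, hx.2]
  have hxr₁ : x / r ≠ -1 := by
    rw [Ne, div_eq_iff hr.ne']; linarith [hx.1]
  have hxr₂ : x / r ≠ 1 := by
    rw [Ne, div_eq_iff hr.ne']; linarith [hx.2]
  have hsq : √(1 - (x / r) ^ 2) = √(r ^ 2 - x ^ 2) / r := by
    rw [show 1 - (x / r) ^ 2 = (r ^ 2 - x ^ 2) / r ^ 2 by field_simp, sqrt_div' _ (sq_nonneg r),
      sqrt_sq hr.le]
  have hderiv := ((hasDerivAt_id' x).mul (((hasDerivAt_pow 2 x).const_sub (r ^ 2)).sqrt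
    hpos.ne')).sub (((hasDerivAt_arccos hxr₁ hxr₂).comp x
      ((hasDerivAt_id' x).div_const r)).const_mul (r ^ 2))
  refine hderiv.congr_deriv ?_
  rw [hsq]
  field_simp
  rw [sq_sqrt hpos.le]
  ring

theorem integral_two_mul_sqrt_sq_sub_sq {r t : ℝ} (hr : 0 < r) (ht : t ∈ Icc (-r) r) :
    ∫ x in t..r, 2 * √(r ^ 2 - x ^ 2) = r ^ 2 * arccos (t / r) - t * √(r ^ 2 - t ^ 2) := by
  rw [intervalIntegral.integral_eq_sub_of_hasDerivAt_of_le ht.2 (by fun_prop)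
    (fun x hx => hasDerivAt_mul_sqrt_sq_sub_sq_sub_arccos hr (Ioo_subset_Ioo_left ht.1 hx))
    (by apply Continuous.intervalIntegrable; fun_prop)]
  simp [div_self hr.ne']

theorem volume_ball_inter_ball_eq_of_dist_eq {E : Type*} [NormedAddCommGroup E]
    [InnerProductSpace ℝ E] [FiniteDimensional ℝ E] [MeasurableSpace E] [BorelSpace E]
    {a b a' b' : E} (h : dist a b = dist a' b') (r s : ℝ) :
    volume (ball a r ∩ ball b s) = volume (ball a' r ∩ ball b' s) := by
  have translate (a b : E) :
      volume (ball a r ∩ ball b s) = volume (ball 0 r ∩ ball (b - a) s) := by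
    rw [← measure_preimage_add volume a, preimage_inter, preimage_add_left_ball,
      preimage_add_left_ball, neg_add_cancel, neg_add_eq_sub]
  obtain ⟨e, he⟩ : ∃ e : E ≃ₗᵢ[ℝ] E, e (b - a) = b' - a' := by
    refine ⟨_, Submodule.reflection_sub ?_⟩
    rw [← dist_eq_norm, ← dist_eq_norm, dist_comm, h, dist_comm]
  have hpre : e ⁻¹' (ball 0 r ∩ ball (b' - a') s) = ball 0 r ∩ ball (b - a) s := by
    nth_rw 1 [← he, ← e.map_zero]
    rw [preimage_inter, e.isometry.preimage_ball, e.isometry.preimage_ball]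
  rw [translate, translate a', ← hpre, e.measurePreserving.measure_preimage
    (measurableSet_ball.inter measurableSet_ball).nullMeasurableSet]

theorem volume_euclideanSpace_fin_two (S : Set (EuclideanSpace ℝ (Fin 2))) :
    volume S = volume {q : ℝ × ℝ | !₂[q.1, q.2] ∈ S} := by
  let e : ℝ × ℝ ≃ᵐ EuclideanSpace ℝ (Fin 2) :=
    MeasurableEquiv.finTwoArrow.symm.trans (MeasurableEquiv.toLp 2 (Fin 2 → ℝ))
  have he : MeasurePreserving e :=
    (PiLp.volume_preserving_toLp (Fin 2)).comp (volume_preserving_finTwoArrow ℝ).symm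
  exact (he.measure_preimage_equiv S).symm

theorem dist_vec_two (x y x' y' : ℝ) :
    dist !₂[x, y] !₂[x', y'] = √((x - x') ^ 2 + (y - y') ^ 2) := by
  simp [EuclideanSpace.dist_eq, Fin.sum_univ_two, Real.dist_eq, sq_abs]

theorem volume_setOf_sq_lt {g : ℝ → ℝ} (hg : Integrable fun x => √(g x)) :
    volume {q : ℝ × ℝ | q.2 ^ 2 < g q.1} = ENNReal.ofReal (∫ x, 2 * √(g x)) := by
  have hregion : {q : ℝ × ℝ | q.2 ^ 2 < g q.1} =
      regionBetween (fun x => -√(g x)) (fun x => √(g x)) univ := by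
    ext q
    simp [regionBetween, ← abs_lt, lt_sqrt (abs_nonneg _), sq_abs]
  rw [hregion, Measure.volume_eq_prod, volume_regionBetween_eq_integral (f := fun x => -√(g x))
    hg.neg.integrableOn hg.integrableOn MeasurableSet.univ
    (fun x _ => by linarith [sqrt_nonneg (g x)]), Measure.restrict_univ]
  congr 2 with x
  simp only [Pi.sub_apply]
  ring

theorem integrable_sqrt_min_sq_sub_sq (d D Δ : ℝ) :
    Integrable fun x => √(min (d ^ 2 - x ^ 2) (D ^ 2 - (x - Δ) ^ 2)) := by
  refine Continuous.integrable_of_hasCompactSupport (by fun_prop)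
    (HasCompactSupport.intro (isCompact_Icc (a := -|d|) (b := |d|)) fun x hx => ?_)
  rw [mem_Icc, ← abs_le, not_le] at hx
  have hdx : d ^ 2 < x ^ 2 := sq_lt_sq.mpr hx
  exact sqrt_eq_zero_of_nonpos ((min_le_left _ _).trans (by linarith))

theorem integral_two_mul_sqrt_min_eq_add_caps {d D Δ x₀ : ℝ} (hd : 0 < d) (hD : 0 < D)
    (hΔ : 0 < Δ) (hx₀ : 2 * Δ * x₀ = d ^ 2 + Δ ^ 2 - D ^ 2) (hx₀d : x₀ ∈ Icc (-d) d)
    (hx₁D : Δ - x₀ ∈ Icc (-D) D) :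
    ∫ x, 2 * √(min (d ^ 2 - x ^ 2) (D ^ 2 - (x - Δ) ^ 2)) =
      d ^ 2 * arccos (x₀ / d) - x₀ * √(d ^ 2 - x₀ ^ 2) +
        (D ^ 2 * arccos ((Δ - x₀) / D) - (Δ - x₀) * √(D ^ 2 - (Δ - x₀) ^ 2)) := by
  set f := fun x => 2 * √(min (d ^ 2 - x ^ 2) (D ^ 2 - (x - Δ) ^ 2))
  -- left of the radical axis `x = x₀` the large circle is binding, right of it the small one
  have hdiff (x : ℝ) : d ^ 2 - x ^ 2 - (D ^ 2 - (x - Δ) ^ 2) = 2 * Δ * (x₀ - x) := by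
    linear_combination -hx₀
  have hleft : EqOn f (fun x => 2 * √(D ^ 2 - (Δ - x) ^ 2)) (uIcc (Δ - D) x₀) := by
    intro x hx
    rw [uIcc_of_le (by linarith [hx₁D.2])] at hx
    have := hdiff x
    simp only [f, min_eq_right (by nlinarith [hx.2] : D ^ 2 - (x - Δ) ^ 2 ≤ d ^ 2 - x ^ 2)]
    ring_nf
  have hright : EqOn f (fun x => 2 * √(d ^ 2 - x ^ 2)) (uIcc x₀ d) := by
    intro x hx
    rw [uIcc_of_le hx₀d.2] at hx
    have := hdiff x
    simp only [f, min_eq_left (by nlinarith [hx.1] : d ^ 2 - x ^ 2 ≤ D ^ 2 - (x - Δ) ^ 2)]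
  have hsupport : ∀ x ∉ Ioc (Δ - D) d, f x = 0 := by
    intro x hx
    rw [mem_Ioc, not_and_or, not_lt, not_le] at hx
    refine mul_eq_zero_of_right _ (sqrt_eq_zero_of_nonpos ?_)
    rcases hx with hx | hx
    · exact (min_le_right _ _).trans (by nlinarith)
    · exact (min_le_left _ _).trans (by nlinarith)
  have hf : Continuous f := by fun_prop
  rw [← setIntegral_eq_integral_of_forall_compl_eq_zero hsupport,
    ← intervalIntegral.integral_of_le (by linarith [hx₁D.2, hx₀d.2]),
    ← intervalIntegral.integral_add_adjacent_intervals (b := x₀) (hf.intervalIntegrable _ _)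
      (hf.intervalIntegrable _ _), intervalIntegral.integral_congr hleft,
    intervalIntegral.integral_congr hright,
    intervalIntegral.integral_comp_sub_left (fun x => 2 * √(D ^ 2 - x ^ 2)), sub_sub_cancel,
    integral_two_mul_sqrt_sq_sub_sq hd hx₀d, integral_two_mul_sqrt_sq_sub_sq hD hx₁D, add_comm]

theorem integral_two_mul_sqrt_min_eq_lens_area {d D Δ : ℝ} (h₁ : |D - d| < Δ) (h₂ : Δ < D + d) :
    ∫ x, 2 * √(min (d ^ 2 - x ^ 2) (D ^ 2 - (x - Δ) ^ 2)) =
      d ^ 2 * arccos ((d ^ 2 + Δ ^ 2 - D ^ 2) / (2 * Δ * d)) +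
        D ^ 2 * arccos ((D ^ 2 + Δ ^ 2 - d ^ 2) / (2 * Δ * D)) -
        1 / 2 * √((d + Δ + D) * (d + Δ - D) * (D + d - Δ) * (D + Δ - d)) := by
  obtain ⟨hdD₁, hdD₂⟩ := abs_lt.mp h₁
  have hd : 0 < d := by linarith
  have hD : 0 < D := by linarith
  have hΔ : 0 < Δ := by linarith
  set x₀ := (d ^ 2 + Δ ^ 2 - D ^ 2) / (2 * Δ) with hx₀
  have hx₀Δ : 2 * Δ * x₀ = d ^ 2 + Δ ^ 2 - D ^ 2 := by rw [hx₀]; field_simp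
  have hx₁ : Δ - x₀ = (D ^ 2 + Δ ^ 2 - d ^ 2) / (2 * Δ) := by rw [hx₀]; field_simp; ring
  have hchord : D ^ 2 - (Δ - x₀) ^ 2 = d ^ 2 - x₀ ^ 2 := by linear_combination hx₀Δ
  have hheron : (d + Δ + D) * (d + Δ - D) * (D + d - Δ) * (D + Δ - d) =
      (2 * Δ) ^ 2 * (d ^ 2 - x₀ ^ 2) := by rw [hx₀]; field_simp; ring
  have hpos : 0 < d ^ 2 - x₀ ^ 2 := by
    have : 0 < (d + Δ + D) * (d + Δ - D) * (D + d - Δ) * (D + Δ - d) := by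
      apply mul_pos (mul_pos (mul_pos _ _) _) _ <;> linarith
    nlinarith
  have hx₀d : x₀ ∈ Icc (-d) d := abs_le_of_sq_le_sq' (by linarith) hd.le
  have hx₁D : Δ - x₀ ∈ Icc (-D) D := abs_le_of_sq_le_sq' (by linarith) hD.le
  have harg₀ : (d ^ 2 + Δ ^ 2 - D ^ 2) / (2 * Δ * d) = x₀ / d := by rw [hx₀, div_div]
  have harg₁ : (D ^ 2 + Δ ^ 2 - d ^ 2) / (2 * Δ * D) = (Δ - x₀) / D := by rw [hx₁, div_div]
  rw [integral_two_mul_sqrt_min_eq_add_caps hd hD hΔ hx₀Δ hx₀d hx₁D, hchord, harg₀, harg₁,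
    hheron, sqrt_mul (sq_nonneg _), sqrt_sq (by positivity)]
  ring

theorem area_inter_two_disks_general
    (d D Δx : ℝ)
    (h₁ : |D - d| < Δx) (h₂ : Δx < D + d)
    (c₁ c₂ : EuclideanSpace ℝ (Fin 2)) (hdist : dist c₁ c₂ = Δx) :
    volume (Metric.ball c₁ d ∩ Metric.ball c₂ D) =
      ENNReal.ofReal
        (d ^ 2 * Real.arccos ((d ^ 2 + Δx ^ 2 - D ^ 2) / (2 * Δx * d)) +
          D ^ 2 * Real.arccos ((D ^ 2 + Δx ^ 2 - d ^ 2) / (2 * Δx * D)) -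
          (1 / 2) * Real.sqrt ((d + Δx + D) * (d + Δx - D) * (D + d - Δx) * (D + Δx - d))) := by
  obtain ⟨hdD₁, hdD₂⟩ := abs_lt.mp h₁
  have hd : 0 < d := by linarith
  have hD : 0 < D := by linarith
  have hcentres : dist c₁ c₂ = dist !₂[0, 0] !₂[Δx, 0] := by
    rw [hdist, dist_vec_two, zero_sub, sub_zero, neg_sq, zero_pow two_ne_zero, add_zero,
      sqrt_sq (by linarith)]
  have hlens : {q : ℝ × ℝ | !₂[q.1, q.2] ∈ ball !₂[0, 0] d ∩ ball !₂[Δx, 0] D} =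
      {q | q.2 ^ 2 < min (d ^ 2 - q.1 ^ 2) (D ^ 2 - (q.1 - Δx) ^ 2)} := by
    ext q
    simp only [mem_ofPred_eq, mem_inter_iff, mem_ball, dist_vec_two, sqrt_lt' hd, sqrt_lt' hD,
      lt_min_iff, sub_zero]
    constructor <;> rintro ⟨h, h'⟩ <;> constructor <;> linarith
  rw [volume_ball_inter_ball_eq_of_dist_eq hcentres, volume_euclideanSpace_fin_two, hlens,
    volume_setOf_sq_lt (integrable_sqrt_min_sq_sub_sq d D Δx),
    integral_two_mul_sqrt_min_eq_lens_area h₁ h₂]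

/-- Area of the intersection of two disks of radii `d` and `D` (with `0 < d ≤ D`) whose
centers are a distance `Δx` apart, where `|D − d| < Δx < D + d`. -/
theorem area_inter_two_disks
    (d D Δx : ℝ) (hd : 0 < d) (hdD : d ≤ D)
    (h₁ : |D - d| < Δx) (h₂ : Δx < D + d)
    (c₁ c₂ : EuclideanSpace ℝ (Fin 2)) (hdist : dist c₁ c₂ = Δx) :
    volume (Metric.ball c₁ d ∩ Metric.ball c₂ D) =
      ENNReal.ofReal
        (d ^ 2 * Real.arccos ((d ^ 2 + Δx ^ 2 - D ^ 2) / (2 * Δx * d)) +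
          D ^ 2 * Real.arccos ((D ^ 2 + Δx ^ 2 - d ^ 2) / (2 * Δx * D)) -
          (1 / 2) * Real.sqrt ((d + Δx + D) * (d + Δx - D) * (D + d - Δx) * (D + Δx - d))) :=
  area_inter_two_disks_general d D Δx h₁ h₂ c₁ c₂ hdist
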